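/- arXiv:1305.6165 — 3 statements merged into one kernel-verified Lean document; each statement's English description precedes it below -/
import Mathlib

section
/- For even p, the minimum number of processes needed for the Ex-Midpoint method (rows of lengths 2,4,...,p=2r, with s_seq = p) to achieve full speedup is ⌈(p+2)/4⌉. -/
/-- For even `p = 2r`, the Ex-Midpoint method consists of independent chains of
lengths `2, 4, ..., 2r`, with `s_seq = p`.  The minimal number of processes `P`
with `P · p ≥ r(r+1)` (total workload) is `⌈(p+2)/4⌉`, and a feasible
assignment into that many processes with load at most `p` each exists. -/
theorem ex_midpoint_min_processes (r p : ℕ) (hr : 1 ≤ r) (hp : p = 2 * r) :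
    IsLeast {P : ℕ | r * (r + 1) ≤ P * p} ((p + 2 + 3) / 4) ∧
    (∃ f : ℕ → ℕ,
      (∀ k ∈ Finset.Icc 1 r, f k < (p + 2 + 3) / 4) ∧
      (∀ j < (p + 2 + 3) / 4,
        ∑ k ∈ (Finset.Icc 1 r).filter (fun k => f k = j), 2 * k ≤ p)) := by
  subst hp
  have hP : (2 * r + 2 + 3) / 4 = r / 2 + 1 := by omega
  rw [hP]
  constructor
  · constructor
    · -- membership: r*(r+1) ≤ (r/2+1)*(2r)
      show r * (r + 1) ≤ (r / 2 + 1) * (2 * r)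
      have h2 : r + 1 ≤ 2 * (r / 2 + 1) := by omega
      calc r * (r + 1) ≤ r * (2 * (r / 2 + 1)) := Nat.mul_le_mul_left r h2
        _ = (r / 2 + 1) * (2 * r) := by ring
    · intro Q hQ
      have hQ' : r * (r + 1) ≤ Q * (2 * r) := hQ
      have h : r * (r + 1) ≤ r * (2 * Q) := by
        calc r * (r + 1) ≤ Q * (2 * r) := hQ'
          _ = r * (2 * Q) := by ring
      have := Nat.le_of_mul_le_mul_left h (by omega : 0 < r)
      omega
  · refine ⟨fun k => min k (r - k), ?_, ?_⟩
    · intro k hk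
      simp only [Finset.mem_Icc] at hk
      show min k (r - k) < r / 2 + 1
      omega
    · intro j hj
      show ∑ k ∈ (Finset.Icc 1 r).filter (fun k => min k (r - k) = j), 2 * k ≤ 2 * r
      have hsub : ((Finset.Icc 1 r).filter (fun k => min k (r - k) = j)) ⊆
          ({j, r - j} : Finset ℕ) := by
        intro k hk
        simp only [Finset.mem_filter, Finset.mem_Icc] at hk
        simp only [Finset.mem_insert, Finset.mem_singleton]
        omega
      have h1 : ∑ k ∈ (Finset.Icc 1 r).filter (fun k => min k (r - k) = j), 2 * k ≤
          ∑ k ∈ ({j, r - j} : Finset ℕ), 2 * k :=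
        Finset.sum_le_sum_of_subset hsub
      have h2 : ∑ k ∈ ({j, r - j} : Finset ℕ), 2 * k ≤ 2 * r := by
        by_cases h : j = r - j
        · rw [show ({j, r - j} : Finset ℕ) = {j} by rw [← h]; simp]
          simp; omega
        · rw [Finset.sum_insert (by simpa using h)]
          simp; omega
      omega
end

section
/- The stability polynomial of the order-p Euler extrapolation method applied to y' = λy is the degree-p Taylor polynomial of the exponential: R(z) = \sum_{k=0}^{p} z^k/k!. -/
open Finset

/-- The Aitken–Neville extrapolation tableau of the Ex-Euler method applied to
the linear test equation: `T z j 1 = (1 + z/j)^j`, and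
`T z j k = T z j (k-1) + (T z j (k-1) - T z (j-1) (k-1)) / (j/(j-k+1) - 1)`. -/
noncomputable def exEulerT (z : ℂ) : ℕ → ℕ → ℂ
  | _, 0 => 0
  | j, 1 => (1 + z / (j : ℂ)) ^ j
  | j, (k + 2) =>
      exEulerT z j (k + 1) +
        (exEulerT z j (k + 1) - exEulerT z (j - 1) (k + 1)) /
          ((j : ℂ) / (((j - (k + 2) + 1 : ℕ) : ℂ)) - 1)

open Polynomial

lemma coeff_comp_X_add_one {f : ℂ[X]} {n : ℕ} (hf : f.natDegree ≤ n + 1) :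
    (f.comp (X + 1)).coeff n = f.coeff n + (n + 1) * f.coeff (n + 1) := by
  rw [comp_eq_sum_left, Polynomial.coeff_sum]
  rw [Polynomial.sum_over_range' f (by simp) (n + 2) (lt_of_le_of_lt hf (Nat.lt_succ_self _))]
  have h : ∀ e ∈ Finset.range (n + 2), (C (f.coeff e) * (X + 1) ^ e).coeff n
      = f.coeff e * (e.choose n : ℂ) := by
    intro e _
    rw [Polynomial.coeff_C_mul, Polynomial.coeff_X_add_one_pow]
  rw [Finset.sum_congr rfl h, Finset.sum_range_succ, Finset.sum_range_succ]
  have h2 : ∀ e ∈ Finset.range n, f.coeff e * (e.choose n : ℂ) = 0 := by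
    intro e he
    rw [Nat.choose_eq_zero_of_lt (Finset.mem_range.mp he)]
    simp
  rw [Finset.sum_eq_zero h2]
  simp [Nat.choose_succ_self_right, mul_comm]

lemma fin_diff (n : ℕ) (f : ℂ[X]) (hf : f.natDegree ≤ n) :
    ∑ i ∈ Finset.range (n + 1), (-1 : ℂ) ^ i * (n.choose i : ℂ) * f.eval (i : ℂ)
      = (-1) ^ n * (n.factorial : ℂ) * f.coeff n := by
  induction n generalizing f with
  | zero =>
    rw [Polynomial.eq_C_of_natDegree_le_zero hf]
    simp
  | succ n ih =>
    set g : ℂ[X] := f.comp (X + 1) - f with hg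
    have hdc : (f.comp (X + 1)).natDegree ≤ n + 1 := by
      rw [Polynomial.natDegree_comp]
      have : (X + 1 : ℂ[X]).natDegree = 1 := by
        simpa using Polynomial.natDegree_X_add_C (1 : ℂ)
      rw [this, mul_one]; exact hf
    have hf2 : f.coeff (n + 2) = 0 :=
      Polynomial.coeff_eq_zero_of_natDegree_lt (lt_of_le_of_lt hf (by omega))
    have hgd : g.natDegree ≤ n := by
      rw [Polynomial.natDegree_le_iff_coeff_eq_zero]
      intro m hm
      rcases Nat.lt_or_ge (n + 1) m with h1 | h1
      · rw [hg, Polynomial.coeff_sub,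
          Polynomial.coeff_eq_zero_of_natDegree_lt (lt_of_le_of_lt hdc h1),
          Polynomial.coeff_eq_zero_of_natDegree_lt (lt_of_le_of_lt hf h1), sub_zero]
      · have hm1 : m = n + 1 := le_antisymm h1 hm
        subst hm1
        rw [hg, Polynomial.coeff_sub, coeff_comp_X_add_one (hf.trans (Nat.le_succ _)), hf2]
        ring
    have hgc : g.coeff n = (n + 1 : ℂ) * f.coeff (n + 1) := by
      rw [hg, Polynomial.coeff_sub, coeff_comp_X_add_one hf]
      ring
    have hge : ∀ i : ℕ, g.eval (i : ℂ) = f.eval ((i : ℂ) + 1) - f.eval (i : ℂ) := by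
      intro i
      rw [hg, Polynomial.eval_sub, Polynomial.eval_comp]
      simp
    set S : ℂ := ∑ i ∈ Finset.range (n + 1), (-1 : ℂ) ^ i * (n.choose i : ℂ) * f.eval (i:ℂ)
      with hSdef
    have hS : S = ∑ i ∈ Finset.range n,
        (-1 : ℂ) ^ (i+1) * (n.choose (i+1) : ℂ) * f.eval ((i:ℂ)+1) + f.eval 0 := by
      rw [hSdef, Finset.sum_range_succ'
        (fun i => (-1 : ℂ) ^ i * (n.choose i : ℂ) * f.eval (i:ℂ)) n]
      push_cast
      simp
    have shift : ∑ i ∈ Finset.range (n + 1), (-1:ℂ)^i * (n.choose (i+1) : ℂ) * f.eval ((i:ℂ)+1)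
        = f.eval 0 - S := by
      rw [Finset.sum_range_succ, Nat.choose_succ_self, hS]
      have : ∀ i ∈ Finset.range n, (-1:ℂ)^i * (n.choose (i+1) : ℂ) * f.eval ((i:ℂ)+1)
          = -((-1:ℂ)^(i+1) * (n.choose (i+1) : ℂ) * f.eval ((i:ℂ)+1)) := by
        intro i _; ring
      rw [Finset.sum_congr rfl this, Finset.sum_neg_distrib]
      push_cast
      ring
    have key : ∑ i ∈ Finset.range (n + 2), (-1 : ℂ) ^ i * ((n+1).choose i : ℂ) * f.eval (i:ℂ)
        = - ∑ i ∈ Finset.range (n + 1), (-1 : ℂ) ^ i * (n.choose i : ℂ) * g.eval (i:ℂ) := by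
      rw [Finset.sum_range_succ'
        (fun i => (-1 : ℂ) ^ i * ((n+1).choose i : ℂ) * f.eval (i:ℂ)) (n+1)]
      have e1 : ∀ i ∈ Finset.range (n+1),
          (-1 : ℂ) ^ (i+1) * (((n+1).choose (i+1)) : ℂ) * f.eval (((i+1:ℕ)):ℂ)
          = -((-1:ℂ)^i * (n.choose i : ℂ) * f.eval ((i:ℂ)+1))
            - (-1:ℂ)^i * (n.choose (i+1) : ℂ) * f.eval ((i:ℂ)+1) := by
        intro i _
        rw [Nat.choose_succ_succ]
        push_cast
        ring
      rw [Finset.sum_congr rfl e1, Finset.sum_sub_distrib, Finset.sum_neg_distrib, shift]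
      have e2 : ∀ i ∈ Finset.range (n+1), (-1:ℂ)^i * (n.choose i : ℂ) * g.eval (i:ℂ)
          = (-1:ℂ)^i * (n.choose i : ℂ) * f.eval ((i:ℂ)+1)
            - (-1:ℂ)^i * (n.choose i : ℂ) * f.eval (i:ℂ) := by
        intro i _; rw [hge]; ring
      rw [Finset.sum_congr rfl e2, Finset.sum_sub_distrib, ← hSdef]
      push_cast
      simp only [Nat.choose_zero_right, Nat.cast_one, one_mul, Nat.cast_ofNat]
      ring
    rw [key]
    have := ih g hgd
    rw [this, hgc, Nat.factorial_succ]
    push_cast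
    ring

/-- Neville coefficient. -/
noncomputable def nevC (j t m : ℕ) : ℂ :=
  (-1) ^ m * ((j - m : ℕ) : ℂ) ^ t /
    ((Nat.factorial (t - m) : ℂ) * (Nat.factorial m : ℂ))

lemma nev_point (j t m : ℕ) (hm : m ≤ t + 1) (hj : t + 2 ≤ j) :
    nevC j (t + 1) m = ((j : ℂ) * (if m ≤ t then nevC j t m else 0)
      - ((j : ℂ) - t - 1) * (if 1 ≤ m then nevC (j - 1) t (m - 1) else 0)) / ((t : ℂ) + 1) := by
  have ht1 : ((t : ℂ) + 1) ≠ 0 := Nat.cast_add_one_ne_zero t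
  have hfac : ∀ a : ℕ, ((Nat.factorial a : ℕ) : ℂ) ≠ 0 :=
    fun a => Nat.cast_ne_zero.mpr (Nat.factorial_ne_zero a)
  rcases Nat.eq_zero_or_pos m with hm0 | hm1
  · subst hm0
    rw [if_pos (Nat.zero_le t), if_neg (by omega)]
    simp only [nevC, Nat.sub_zero, pow_zero, Nat.factorial_zero]
    rw [Nat.factorial_succ, pow_succ]
    push_cast
    field_simp [hfac t]
    ring
  · obtain ⟨m', rfl⟩ : ∃ m', m = m' + 1 := ⟨m - 1, by omega⟩
    rw [if_pos (by omega : 1 ≤ m' + 1), Nat.add_sub_cancel]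
    have hW : ((j - (m' + 1) : ℕ) : ℂ) = (j : ℂ) - m' - 1 := by
      rw [Nat.cast_sub (by omega : m' + 1 ≤ j)]; push_cast; ring
    have hW' : ((j - 1 - m' : ℕ) : ℂ) = (j : ℂ) - m' - 1 := by
      rw [show j - 1 - m' = j - (m' + 1) from by omega, hW]
    have hm'f : ((Nat.factorial m' : ℕ) : ℂ) ≠ 0 := hfac m'
    have hm'1 : ((m' : ℂ) + 1) ≠ 0 := Nat.cast_add_one_ne_zero m'
    rcases Nat.lt_or_ge m' t with hm't | hm't
    · rw [if_pos (by omega : m' + 1 ≤ t)]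
      obtain ⟨s, rfl⟩ : ∃ s, t = m' + 1 + s := ⟨t - m' - 1, by omega⟩
      simp only [nevC, hW, hW']
      rw [show m' + 1 + s + 1 - (m' + 1) = s + 1 from by omega,
          show m' + 1 + s - (m' + 1) = s from by omega,
          show m' + 1 + s - m' = s + 1 from by omega]
      have hsf : ((Nat.factorial s : ℕ) : ℂ) ≠ 0 := hfac s
      have hs1 : ((s : ℂ) + 1) ≠ 0 := Nat.cast_add_one_ne_zero s
      rw [pow_succ (-1 : ℂ) m', pow_succ ((j : ℂ) - m' - 1) (m' + 1 + s),
        Nat.factorial_succ s, Nat.factorial_succ m']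
      push_cast
      have htc : ((m' : ℂ) + 1 + (s : ℂ) + 1) ≠ 0 := by
        have h2 : ((m' + s + 2 : ℕ) : ℂ) ≠ 0 := Nat.cast_ne_zero.mpr (by omega)
        push_cast at h2
        exact fun h => h2 (by linear_combination h)
      rw [eq_div_iff htc]
      field_simp
      ring
    · have : m' = t := by omega
      subst this
      rw [if_neg (by omega : ¬ (m' + 1 ≤ m'))]
      simp only [nevC, hW, hW']
      rw [show m' + 1 - (m' + 1) = 0 from by omega, show m' - m' = 0 from by omega]
      rw [pow_succ (-1 : ℂ) m', pow_succ ((j : ℂ) - m' - 1) m',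
        Nat.factorial_succ m', Nat.factorial_zero]
      push_cast
      rw [eq_div_iff ht1]
      field_simp
      ring

lemma T_closed (z : ℂ) : ∀ t j : ℕ, t + 1 ≤ j →
    exEulerT z j (t + 1)
      = ∑ m ∈ Finset.range (t + 1),
          nevC j t m * (1 + z / ((j - m : ℕ) : ℂ)) ^ (j - m : ℕ) := by
  intro t
  induction t with
  | zero =>
    intro j hj
    simp [exEulerT, nevC]
  | succ t ih =>
    intro j hj
    have hj1 : t + 1 ≤ j - 1 := by omega
    have hT1 := ih j (by omega)
    have hT2 := ih (j - 1) hj1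
    have hq : (j - (t + 2) + 1 : ℕ) = j - t - 1 := by omega
    have hqc : ((j - t - 1 : ℕ) : ℂ) = (j : ℂ) - t - 1 := by
      rw [show j - t - 1 = j - (t + 1) from by omega, Nat.cast_sub (by omega)]
      push_cast; ring
    have hqne : ((j : ℂ) - t - 1) ≠ 0 := by
      rw [← hqc]; exact Nat.cast_ne_zero.mpr (by omega)
    have ht1ne : ((t : ℂ) + 1) ≠ 0 := Nat.cast_add_one_ne_zero t
    have hrec : exEulerT z j (t + 2)
        = ((j : ℂ) * exEulerT z j (t + 1)
            - ((j : ℂ) - t - 1) * exEulerT z (j - 1) (t + 1)) / ((t : ℂ) + 1) := by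
      show exEulerT z j (t + 1) +
        (exEulerT z j (t + 1) - exEulerT z (j - 1) (t + 1)) /
          ((j : ℂ) / (((j - (t + 2) + 1 : ℕ) : ℂ)) - 1) = _
      rw [hq, hqc]
      have hD : (j : ℂ) / ((j : ℂ) - t - 1) - 1 = ((t : ℂ) + 1) / ((j : ℂ) - t - 1) := by
        field_simp; ring
      rw [hD, div_div_eq_mul_div]
      field_simp
      ring
    rw [hrec, hT1, hT2]
    have hshift : ∑ m ∈ Finset.range (t + 1),
          nevC (j - 1) t m * (1 + z / ((j - 1 - m : ℕ) : ℂ)) ^ (j - 1 - m : ℕ)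
        = ∑ m ∈ Finset.range (t + 2),
          (if 1 ≤ m then nevC (j - 1) t (m - 1) else 0)
            * (1 + z / ((j - m : ℕ) : ℂ)) ^ (j - m : ℕ) := by
      rw [Finset.sum_range_succ'
        (fun m => (if 1 ≤ m then nevC (j - 1) t (m - 1) else 0)
            * (1 + z / ((j - m : ℕ) : ℂ)) ^ (j - m : ℕ)) (t + 1)]
      have h0 : (if 1 ≤ (0 : ℕ) then nevC (j - 1) t (0 - 1) else 0)
          * (1 + z / ((j - 0 : ℕ) : ℂ)) ^ (j - 0 : ℕ) = 0 := by
        rw [if_neg (by omega)]; ring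
      rw [h0, add_zero]
      refine (Finset.sum_congr rfl fun m _ => ?_).symm
      rw [if_pos (by omega), Nat.add_sub_cancel,
        show j - (m + 1) = j - 1 - m from by omega]
    have hext : ∑ m ∈ Finset.range (t + 1),
          nevC j t m * (1 + z / ((j - m : ℕ) : ℂ)) ^ (j - m : ℕ)
        = ∑ m ∈ Finset.range (t + 2),
          (if m ≤ t then nevC j t m else 0)
            * (1 + z / ((j - m : ℕ) : ℂ)) ^ (j - m : ℕ) := by
      conv_rhs => rw [Finset.sum_range_succ]
      rw [if_neg (by omega : ¬ (t + 1 ≤ t)), zero_mul, add_zero]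
      exact Finset.sum_congr rfl fun m hm =>
        by rw [if_pos (Finset.mem_range_succ_iff.mp hm)]
    rw [hshift, hext, Finset.mul_sum, Finset.mul_sum, ← Finset.sum_sub_distrib,
      Finset.sum_div]
    refine Finset.sum_congr rfl fun m hm => ?_
    rw [nev_point j t m (Finset.mem_range_succ_iff.mp hm) (by omega)]
    ring

lemma diff_id (n d : ℕ) (hd : d ≤ n) :
    ∑ i ∈ Finset.range (n + 1), (-1 : ℂ) ^ i * (n.choose i : ℂ) *
      (((i : ℂ) + 1) ^ (n - d) * (((i + 1).descFactorial d : ℕ) : ℂ))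
      = (-1) ^ n * (n.factorial : ℂ) := by
  set f : ℂ[X] := (X + 1) ^ (n - d) * ((descPochhammer ℂ d).comp (X + 1)) with hf
  have hX1 : (X + 1 : ℂ[X]) = X + C 1 := by rw [map_one]
  have hm1 : ((X + 1 : ℂ[X]) ^ (n - d)).Monic := by
    rw [hX1]; exact (monic_X_add_C 1).pow _
  have hm2 : ((descPochhammer ℂ d).comp (X + 1)).Monic := by
    rw [hX1]; exact (monic_descPochhammer ℂ d).comp_X_add_C 1
  have hmono : f.Monic := hm1.mul hm2
  have hdeg : f.natDegree = n := by
    rw [hf, hm1.natDegree_mul hm2]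
    rw [hX1, Polynomial.natDegree_pow, Polynomial.natDegree_X_add_C,
      Polynomial.natDegree_comp, Polynomial.natDegree_X_add_C]
    have h5 : (descPochhammer ℂ d).natDegree = d := descPochhammer_natDegree ℂ d
    rw [h5]
    omega
  have heval : ∀ i : ℕ, f.eval (i : ℂ)
      = ((i : ℂ) + 1) ^ (n - d) * (((i + 1).descFactorial d : ℕ) : ℂ) := by
    intro i
    rw [hf, Polynomial.eval_mul, Polynomial.eval_pow, Polynomial.eval_add,
      Polynomial.eval_X, Polynomial.eval_one, Polynomial.eval_comp,
      Polynomial.eval_add, Polynomial.eval_X, Polynomial.eval_one]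
    congr 1
    have h6 := descPochhammer_eval_eq_descFactorial ℂ (i + 1) d
    rw [← h6]
    push_cast
    ring_nf
  have h7 := fin_diff n f (le_of_eq hdeg)
  rw [show f.coeff n = 1 from by rw [← hdeg]; exact hmono.coeff_natDegree, mul_one] at h7
  rw [← h7]
  exact Finset.sum_congr rfl fun i _ => by rw [heval]

lemma coeff_id (n d : ℕ) (hd : d ≤ n) :
    ∑ m ∈ Finset.range (n + 1),
      (-1 : ℂ) ^ (n - m) * ((m : ℂ) + 1) ^ n /
        ((Nat.factorial m : ℂ) * (Nat.factorial (n - m) : ℂ)) *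
        (((m + 1).choose d : ℕ) : ℂ) / ((m : ℂ) + 1) ^ d
      = 1 / (Nat.factorial d : ℂ) := by
  have hfac : ∀ a : ℕ, ((Nat.factorial a : ℕ) : ℂ) ≠ 0 :=
    fun a => Nat.cast_ne_zero.mpr (Nat.factorial_ne_zero a)
  have hterm : ∀ m ∈ Finset.range (n + 1),
      (-1 : ℂ) ^ (n - m) * ((m : ℂ) + 1) ^ n /
        ((Nat.factorial m : ℂ) * (Nat.factorial (n - m) : ℂ)) *
        (((m + 1).choose d : ℕ) : ℂ) / ((m : ℂ) + 1) ^ d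
      = ((-1 : ℂ) ^ n / ((n.factorial : ℂ) * (d.factorial : ℂ))) *
        ((-1 : ℂ) ^ m * (n.choose m : ℂ) *
          (((m : ℂ) + 1) ^ (n - d) * (((m + 1).descFactorial d : ℕ) : ℂ))) := by
    intro m hm
    have hm' : m ≤ n := Finset.mem_range_succ_iff.mp hm
    have hM : ((m : ℂ) + 1) ≠ 0 := Nat.cast_add_one_ne_zero m
    have hsg : (-1 : ℂ) ^ (n - m) * (-1 : ℂ) ^ m = (-1 : ℂ) ^ n := by
      rw [← pow_add, Nat.sub_add_cancel hm']
    have hb : (-1 : ℂ) ^ m * (-1 : ℂ) ^ m = 1 := by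
      rw [← mul_pow]; norm_num
    have hsg2 : (-1 : ℂ) ^ n * (-1 : ℂ) ^ m = (-1 : ℂ) ^ (n - m) := by
      rw [← hsg, mul_assoc, hb, mul_one]
    have hdf : (((m + 1).descFactorial d : ℕ) : ℂ)
        = (d.factorial : ℂ) * (((m + 1).choose d : ℕ) : ℂ) := by
      exact_mod_cast congrArg (Nat.cast : ℕ → ℂ)
        (Nat.descFactorial_eq_factorial_mul_choose (m + 1) d)
    have hch : ((n.choose m : ℕ) : ℂ) * ((Nat.factorial m : ℂ) * (Nat.factorial (n - m) : ℂ))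
        = (n.factorial : ℂ) := by
      exact_mod_cast congrArg (Nat.cast : ℕ → ℂ)
        (by rw [← mul_assoc]; exact Nat.choose_mul_factorial_mul_factorial hm')
    have hp2 : ((m : ℂ) + 1) ^ (n - d) * ((m : ℂ) + 1) ^ d = ((m : ℂ) + 1) ^ n := by
      rw [← pow_add, Nat.sub_add_cancel hd]
    rw [hdf, div_mul_eq_mul_div, div_div, div_mul_eq_mul_div,
      div_eq_div_iff (mul_ne_zero (mul_ne_zero (hfac m) (hfac (n-m))) (pow_ne_zero _ hM)) (mul_ne_zero (hfac n) (hfac d)), ← hp2, ← hch, ← hsg2]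
    ring
  rw [Finset.sum_congr rfl hterm, ← Finset.mul_sum, diff_id n d hd]
  have h9 : (-1 : ℂ) ^ n * (-1 : ℂ) ^ n = 1 := by
    rw [← mul_pow]; norm_num
  rw [div_mul_eq_mul_div, div_eq_div_iff (mul_ne_zero (hfac n) (hfac d)) (hfac d)]
  linear_combination ((n.factorial : ℂ) * (d.factorial : ℂ)) * h9

/-- The stability polynomial of the order-`p` Euler extrapolation method is the
degree-`p` Taylor polynomial of the exponential:
`T_{pp}(z) = ∑_{k=0}^{p} z^k / k!`. -/
theorem ex_euler_stability_polynomial (p : ℕ) (hp : 1 ≤ p) (z : ℂ) :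
    exEulerT z p p = ∑ k ∈ Finset.range (p + 1), z ^ k / (Nat.factorial k : ℂ) := by
  obtain ⟨n, rfl⟩ : ∃ n, p = n + 1 := ⟨p - 1, by omega⟩
  have hfac : ∀ a : ℕ, ((Nat.factorial a : ℕ) : ℂ) ≠ 0 :=
    fun a => Nat.cast_ne_zero.mpr (Nat.factorial_ne_zero a)
  rw [T_closed z n (n + 1) le_rfl]
  -- reflect the sum
  rw [← Finset.sum_range_reflect]
  have hrefl : ∀ m ∈ Finset.range (n + 1),
      nevC (n + 1) n (n + 1 - 1 - m)
          * (1 + z / ((n + 1 - (n + 1 - 1 - m) : ℕ) : ℂ)) ^ (n + 1 - (n + 1 - 1 - m) : ℕ)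
      = ((-1 : ℂ) ^ (n - m) * ((m : ℂ) + 1) ^ n /
          ((Nat.factorial m : ℂ) * (Nat.factorial (n - m) : ℂ)))
        * (1 + z / ((m : ℂ) + 1)) ^ (m + 1) := by
    intro m hm
    have hm' : m ≤ n := Finset.mem_range_succ_iff.mp hm
    rw [show n + 1 - 1 - m = n - m from by omega,
      show n + 1 - (n - m) = m + 1 from by omega]
    unfold nevC
    rw [show n + 1 - (n - m) = m + 1 from by omega,
      show n - (n - m) = m from by omega]
    push_cast
    ring
  rw [Finset.sum_congr rfl hrefl]
  -- binomial expansion, extended to range (n + 2)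
  have hbin : ∀ m ∈ Finset.range (n + 1),
      ((-1 : ℂ) ^ (n - m) * ((m : ℂ) + 1) ^ n /
          ((Nat.factorial m : ℂ) * (Nat.factorial (n - m) : ℂ)))
        * (1 + z / ((m : ℂ) + 1)) ^ (m + 1)
      = ∑ d ∈ Finset.range (n + 2),
          ((-1 : ℂ) ^ (n - m) * ((m : ℂ) + 1) ^ n /
            ((Nat.factorial m : ℂ) * (Nat.factorial (n - m) : ℂ)))
          * ((z / ((m : ℂ) + 1)) ^ d * (((m + 1).choose d : ℕ) : ℂ)) := by
    intro m hm
    have hm' : m ≤ n := Finset.mem_range_succ_iff.mp hm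
    rw [add_comm (1 : ℂ) (z / ((m : ℂ) + 1)), add_pow (z / ((m : ℂ) + 1)) 1 (m + 1)]
    rw [Finset.sum_subset (Finset.range_subset_range.mpr (by omega : m + 1 + 1 ≤ n + 2))
      (fun d _ hd => by
        rw [Nat.choose_eq_zero_of_lt (by simpa using hd : m + 1 < d)]
        simp)]
    rw [Finset.mul_sum]
    exact Finset.sum_congr rfl fun d _ => by rw [one_pow]; ring
  rw [Finset.sum_congr rfl hbin, Finset.sum_comm]
  refine Finset.sum_congr rfl fun d hd => ?_
  have hd' : d ≤ n + 1 := Finset.mem_range_succ_iff.mp hd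
  rcases Nat.lt_or_ge d (n + 1) with hdn | hdn
  · -- d ≤ n : use coeff_id
    have key := coeff_id n d (by omega)
    calc ∑ m ∈ Finset.range (n + 1),
          ((-1 : ℂ) ^ (n - m) * ((m : ℂ) + 1) ^ n /
            ((Nat.factorial m : ℂ) * (Nat.factorial (n - m) : ℂ)))
          * ((z / ((m : ℂ) + 1)) ^ d * (((m + 1).choose d : ℕ) : ℂ))
        = z ^ d * ∑ m ∈ Finset.range (n + 1),
            (-1 : ℂ) ^ (n - m) * ((m : ℂ) + 1) ^ n /
              ((Nat.factorial m : ℂ) * (Nat.factorial (n - m) : ℂ)) *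
              (((m + 1).choose d : ℕ) : ℂ) / ((m : ℂ) + 1) ^ d := by
          rw [Finset.mul_sum]
          exact Finset.sum_congr rfl fun m _ => by rw [div_pow]; ring
      _ = z ^ d / (Nat.factorial d : ℂ) := by rw [key, mul_one_div]
  · -- d = n + 1 : single term m = n
    have hdn1 : d = n + 1 := by omega
    subst hdn1
    rw [Finset.sum_eq_single_of_mem n (Finset.self_mem_range_succ n)
      (fun b hbm hb => by
        have hble : b ≤ n := Finset.mem_range_succ_iff.mp hbm
        rw [Nat.choose_eq_zero_of_lt (by omega : b + 1 < n + 1)]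
        simp)]
    rw [show n - n = 0 from by omega, Nat.choose_self, Nat.factorial_succ]
    have hM : ((n : ℂ) + 1) ≠ 0 := Nat.cast_add_one_ne_zero n
    rw [div_pow, pow_succ ((n : ℂ) + 1) n]
    push_cast
    field_simp [hfac n]
    ring
end

section
/- For p ≡ 1 or 2 (mod 4), the degree-p Taylor polynomial R(z)=\sum_{k=0}^p z^k/k! satisfies |R(iy)| > 1 for all sufficiently small y ≠ 0 real; hence the imaginary stability interval of order-p extrapolation is empty for such p. -/
/-!
Write `T` for the degree-`p` Taylor polynomial of `exp` and `t = exp - T` for its tail. Since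
`exp z * exp (-z) = 1`,
`T z * T (-z) - 1 = t z * t (-z) - (exp (-z) * t z + exp z * t (-z))`,
and `exp (-z) * t z = z ^ (p + 1) / (p + 1)! - (p + 1) * z ^ (p + 2) / (p + 2)! + O(z ^ (p + 3))`.
On the imaginary axis `T (-(I * y))` is the conjugate of `T (I * y)`, so the left-hand side is
`‖T (I * y)‖ ^ 2 - 1`, and the right-hand side is governed by the even part of these two
monomials: it is `2 * y ^ (p + 1) / (p + 1)! + O(y ^ (p + 2))` for `p ≡ 1 (mod 4)` and
`2 * (p + 1) * y ^ (p + 2) / (p + 2)! + O(y ^ (p + 3))` for `p ≡ 2 (mod 4)`. In both cases the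
leading term is a positive multiple of an even power of `y`.
-/

open Complex ComplexConjugate Finset Filter Topology Asymptotics
open scoped Nat

lemma Asymptotics.IsBigO.comp_of_norm_eq {𝕜 𝕜' E : Type*} [NormedDivisionRing 𝕜]
    [NormedDivisionRing 𝕜'] [Norm E] {f : 𝕜' → E} {n : ℕ} (hf : f =O[𝓝 0] (· ^ n))
    {e : 𝕜 → 𝕜'} (he : ∀ x, ‖e x‖ = ‖x‖) :
    (fun x ↦ f (e x)) =O[𝓝 0] (· ^ n) := by
  have he0 : Tendsto e (𝓝 0) (𝓝 0) := by
    rw [tendsto_zero_iff_norm_tendsto_zero]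
    simpa only [he] using tendsto_norm_zero
  exact (hf.comp_tendsto he0).trans (.of_bound 1 (.of_forall fun x ↦ by simp [he]))

lemma isBigO_pow_pow_of_le {𝕜 : Type*} [NormedDivisionRing 𝕜] {m n : ℕ} (h : m ≤ n) :
    (fun x : 𝕜 ↦ x ^ n) =O[𝓝 0] (· ^ m) := by
  rcases h.eq_or_lt with rfl | h
  · exact isBigO_refl _ _
  · exact (isLittleO_pow_pow (𝕜 := 𝕜) h).isBigO

lemma eventually_pos_of_sub_mul_pow_isLittleO {g : ℝ → ℝ} {c : ℝ} {n : ℕ} (hc : 0 < c)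
    (hn : Even n) (h : (fun y ↦ g y - c * y ^ n) =o[𝓝 0] (· ^ n)) :
    ∀ᶠ y in 𝓝[≠] 0, 0 < g y := by
  filter_upwards [nhdsWithin_le_nhds (h.bound (half_pos hc)), self_mem_nhdsWithin]
    with y hy hy0
  have hpow : 0 < y ^ n := hn.pow_pos hy0
  rw [Real.norm_eq_abs, Real.norm_eq_abs, abs_of_pos hpow] at hy
  nlinarith [neg_abs_le (g y - c * y ^ n)]

noncomputable def expTaylor (p : ℕ) (z : ℂ) : ℂ := ∑ k ∈ range (p + 1), z ^ k / k !

section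

variable (p : ℕ)

lemma conj_expTaylor (z : ℂ) : conj (expTaylor p z) = expTaylor p (conj z) := by
  simp [expTaylor]

lemma expTaylor_mul_expTaylor_neg_I_mul (y : ℝ) :
    expTaylor p (I * y) * expTaylor p (-(I * y)) = (‖expTaylor p (I * y)‖ ^ 2 : ℝ) := by
  have : conj (I * y) = -(I * y) := by simp
  rw [← this, ← conj_expTaylor, mul_conj, Complex.sq_norm]

lemma expTaylor_mul_expTaylor_neg_sub_one (z : ℂ) :
    expTaylor p z * expTaylor p (-z) - 1 =
      (exp z - expTaylor p z) * (exp (-z) - expTaylor p (-z))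
        - (exp (-z) * (exp z - expTaylor p z) + exp z * (exp (-z) - expTaylor p (-z))) := by
  linear_combination (by rw [← exp_add, add_neg_cancel, exp_zero] : exp z * exp (-z) = 1)

lemma exp_sub_expTaylor_sub_isBigO :
    (fun z ↦ exp z - expTaylor p z - z ^ (p + 1) / (p + 1)! - z ^ (p + 2) / (p + 2)!)
      =O[𝓝 0] (· ^ (p + 3)) := by
  convert exp_sub_sum_range_isBigO_pow (p + 3) using 2 with z
  simp only [expTaylor, sum_range_succ]
  ring

lemma exp_neg_mul_exp_sub_expTaylor_isBigO :
    (fun z ↦ exp (-z) * (exp z - expTaylor p z)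
        - (z ^ (p + 1) / (p + 1)! - (p + 1) * z ^ (p + 2) / (p + 2)!)) =O[𝓝 0] (· ^ (p + 3)) := by
  have hexp : (fun z : ℂ ↦ exp (-z) - (1 - z)) =O[𝓝 0] (· ^ 2) := by
    refine ((exp_sub_sum_range_isBigO_pow 2).comp_of_norm_eq norm_neg).congr_left
      fun z ↦ ?_
    simp only [sum_range_succ, range_one, sum_singleton, Nat.factorial_zero, Nat.factorial_one,
      Nat.cast_one]
    ring
  have hlead : (fun z : ℂ ↦ ((p + 1)! : ℂ)⁻¹ * z ^ (p + 1) + ((p + 2)! : ℂ)⁻¹ * z ^ (p + 2))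
      =O[𝓝 0] (· ^ (p + 1)) :=
    ((isBigO_refl _ _).const_mul_left _).add
      ((isLittleO_pow_pow (by omega)).isBigO.const_mul_left _)
  have hbdd : (fun z : ℂ ↦ exp (-z)) =O[𝓝 0] (fun _ ↦ (1 : ℂ)) :=
    ((continuous_exp.comp continuous_neg).tendsto 0).isBigO_one ℂ
  -- `exp (-z) * t = exp (-z) * (t - s) + (exp (-z) - (1 - z)) * s + (1 - z) * s`,
  -- where `s` is the sum of the first two monomials of the tail `t`
  have hsplit := ((hbdd.mul (exp_sub_expTaylor_sub_isBigO p)).congr_right fun z ↦ one_mul _).add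
    (((hexp.mul hlead).congr_right fun z ↦ by ring).sub
      ((isBigO_refl (· ^ (p + 3)) _).const_mul_left ((p + 2)! : ℂ)⁻¹))
  refine hsplit.congr_left fun z ↦ ?_
  have hfac : ((p + 2)! : ℂ) = (p + 2) * (p + 1)! := by push_cast [Nat.factorial_succ]; ring
  have h1 : ((p + 1)! : ℂ) ≠ 0 := by exact_mod_cast (p + 1).factorial_ne_zero
  have h2 : (p + 2 : ℂ) ≠ 0 := by exact_mod_cast (p + 1).succ_ne_zero
  rw [hfac]
  field_simp
  ring

lemma expTaylor_mul_expTaylor_neg_sub_one_isBigO (hp : 1 ≤ p) :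
    (fun z ↦ expTaylor p z * expTaylor p (-z) - 1
        + ((z ^ (p + 1) + (-z) ^ (p + 1)) / (p + 1)!
          - (p + 1) * (z ^ (p + 2) + (-z) ^ (p + 2)) / (p + 2)!)) =O[𝓝 0] (· ^ (p + 3)) := by
  have htail : (fun z ↦ exp z - expTaylor p z) =O[𝓝 0] (· ^ (p + 1)) :=
    exp_sub_sum_range_isBigO_pow (p + 1)
  have hprod := ((htail.mul (htail.comp_of_norm_eq norm_neg)).congr_right
    fun z ↦ (pow_add z _ _).symm).trans (isBigO_pow_pow_of_le (by omega : p + 3 ≤ p + 1 + (p + 1)))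
  have hU := exp_neg_mul_exp_sub_expTaylor_isBigO p
  refine (hprod.sub (hU.add (hU.comp_of_norm_eq norm_neg))).congr_left fun z ↦ ?_
  simp only [neg_neg]
  rw [expTaylor_mul_expTaylor_neg_sub_one]
  ring

lemma norm_sq_expTaylor_I_mul_sub_one_isLittleO_of_mod_four_eq_one (hp : p % 4 = 1) :
    (fun y : ℝ ↦ ‖expTaylor p (I * y)‖ ^ 2 - 1 - 2 / (p + 1)! * y ^ (p + 1))
      =o[𝓝 0] (· ^ (p + 1)) := by
  have h := (expTaylor_mul_expTaylor_neg_sub_one_isBigO p (by omega)).comp_of_norm_eq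
    (e := fun y : ℝ ↦ I * y) (by simp)
  refine isLittleO_ofReal_left.1 ((h.trans_isLittleO (isLittleO_pow_pow (by omega))).congr_left
    fun y ↦ ?_)
  have hI : I ^ (p + 1) = -1 := by rw [I_pow_eq_pow_mod, show (p + 1) % 4 = 2 by omega, I_sq]
  rw [expTaylor_mul_expTaylor_neg_I_mul, (Nat.even_iff.2 (by omega) : Even (p + 1)).neg_pow,
    (Nat.odd_iff.2 (by omega) : Odd (p + 2)).neg_pow]
  simp only [mul_pow, hI]
  push_cast
  ring

lemma norm_sq_expTaylor_I_mul_sub_one_isLittleO_of_mod_four_eq_two (hp : p % 4 = 2) :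
    (fun y : ℝ ↦ ‖expTaylor p (I * y)‖ ^ 2 - 1 - 2 * (p + 1) / (p + 2)! * y ^ (p + 2))
      =o[𝓝 0] (· ^ (p + 2)) := by
  have h := (expTaylor_mul_expTaylor_neg_sub_one_isBigO p (by omega)).comp_of_norm_eq
    (e := fun y : ℝ ↦ I * y) (by simp)
  refine isLittleO_ofReal_left.1 ((h.trans_isLittleO (isLittleO_pow_pow (by omega))).congr_left
    fun y ↦ ?_)
  have hI : I ^ (p + 2) = 1 := by rw [I_pow_eq_pow_mod, show (p + 2) % 4 = 0 by omega, pow_zero]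
  rw [expTaylor_mul_expTaylor_neg_I_mul, (Nat.odd_iff.2 (by omega) : Odd (p + 1)).neg_pow,
    (Nat.even_iff.2 (by omega) : Even (p + 2)).neg_pow]
  simp only [mul_pow, hI]
  push_cast
  ring

end

/-- For `p ≡ 1` or `2 (mod 4)`, the degree-`p` Taylor polynomial
`R(z) = ∑_{k=0}^p z^k/k!` satisfies `|R(iy)| > 1` for all sufficiently small
real `y ≠ 0`; hence the imaginary stability interval of order-`p`
extrapolation is empty for such `p`. -/
theorem taylor_poly_imag_instability (p : ℕ)
    (hp : p % 4 = 1 ∨ p % 4 = 2)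
    (R : ℂ → ℂ)
    (hR : ∀ z, R z = ∑ k ∈ Finset.range (p + 1), z ^ k / (Nat.factorial k : ℂ)) :
    ∃ δ > (0 : ℝ), ∀ y : ℝ, 0 < |y| → |y| < δ →
      1 < ‖R (Complex.I * y)‖ := by
  obtain rfl : R = expTaylor p := funext hR
  have hpos : ∀ᶠ y : ℝ in 𝓝[≠] 0, 0 < ‖expTaylor p (I * y)‖ ^ 2 - 1 := by
    rcases hp with hp | hp
    · exact eventually_pos_of_sub_mul_pow_isLittleO (by positivity) (Nat.even_iff.2 (by omega))
        (norm_sq_expTaylor_I_mul_sub_one_isLittleO_of_mod_four_eq_one p hp)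
    · exact eventually_pos_of_sub_mul_pow_isLittleO (by positivity) (Nat.even_iff.2 (by omega))
        (norm_sq_expTaylor_I_mul_sub_one_isLittleO_of_mod_four_eq_two p hp)
  obtain ⟨δ, hδ, hball⟩ := Metric.eventually_nhds_iff.1 (eventually_nhdsWithin_iff.1 hpos)
  refine ⟨δ, hδ, fun y hy0 hyδ ↦ ?_⟩
  have := hball (by rwa [Real.dist_0_eq_abs]) (abs_pos.1 hy0)
  exact (one_lt_sq_iff₀ (norm_nonneg _)).1 (by linarith)
end
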